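/- arXiv:1611.04447 — 3 statements merged into one kernel-verified Lean document; each statement's English description precedes it below -/
import Mathlib

section
/- Let k, m, n be positive integers with k < m ≤ n and gcd(n,s) = 1. Let φ : F_{q^n} → F_{q^n} be an F_q-linear map such that for every f ∈ G_{k,s} there exists g ∈ G_{k,s} with φ(f(u)) = g(u) for all u ∈ U_S. Then for every a ∈ F_{q^n} there exists b ∈ F_{q^n} such that φ(a·u) = b·u for all u ∈ U_S. -/
/-!
Let `σ = (· ^ q ^ s)`. As `gcd(n, s) = 1`, `σ` has order `n` and fixed field `F_q`. By Dedekind's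
lemma `σ⁰, …, σⁿ⁻¹` form an `F_{q^n}`-basis of the `F_q`-linear maps, so `φ = ∑ dᵢ σⁱ`.
Combining the maps `u ↦ φ(a σʲ(u))` over `a` with suitable weights isolates `dᵢ σ^(i+j)`, so
whenever `dᵢ ≠ 0` each of `σⁱ, …, σ^(i+k-1)` agrees on `U_S` with a member of `G_{k,s}`.
If `σⁱ` agrees with one of degree `e` with `0 < e < k`, then `σ^(i+k-e)` agrees with one of
degree exactly `k`; but a `σ`-polynomial of degree at most `k` is determined by its values on
`k + 1` vectors independent over `F_q`, since their Moore matrix is invertible. So `σⁱ` is a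
scalar `cᵢ` on `U_S`, and `φ(a u) = (∑ dᵢ σⁱ(a) cᵢ) u`.
-/

open Finset Polynomial

section TwistedPolynomial

variable {F K : Type*} [Field F] [Field K] [Algebra F K] (σ : K →ₐ[F] K)

/-- Reads `∑ aₗ Xˡ` as the `σ`-linearized polynomial `u ↦ ∑ aₗ σˡ(u)`. -/
def twistedEval (u : K) : K[X] →ₗ[K] K :=
  lsum fun l => LinearMap.mulRight K ((σ ^ l) u)

theorem twistedEval_apply (u : K) (p : K[X]) :
    twistedEval σ u p = p.sum fun l a => a * (σ ^ l) u :=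
  lsum_apply _ p

theorem twistedEval_monomial (u : K) (l : ℕ) (a : K) :
    twistedEval σ u (monomial l a) = a * (σ ^ l) u := by
  rw [twistedEval_apply, sum_monomial_index a (fun l a => a * (σ ^ l) u) (zero_mul _)]

theorem twistedEval_C (u a : K) : twistedEval σ u (C a) = a * u := by
  rw [← monomial_zero_left, twistedEval_monomial, pow_zero, AlgHom.one_apply]

theorem twistedEval_eq_sum_fin {t : ℕ} {p : K[X]} (hp : p.degree < t) (u : K) :
    twistedEval σ u p = ∑ l : Fin t, p.coeff l * (σ ^ (l : ℕ)) u :=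
  (twistedEval_apply σ u p).trans (sum_fin _ (fun _ => zero_mul _) hp).symm

theorem twistedEval_map_mul_X_pow (u : K) (j : ℕ) (p : K[X]) :
    twistedEval σ u (p.map (σ ^ j).toRingHom * X ^ j) = (σ ^ j) (twistedEval σ u p) := by
  induction p using Polynomial.induction_on' with
  | add p p' hp hp' => rw [Polynomial.map_add, add_mul, map_add, hp, hp', map_add, map_add]
  | monomial l a =>
    rw [map_monomial, monomial_mul_X_pow, twistedEval_monomial, twistedEval_monomial, map_mul,
      add_comm, pow_add, AlgHom.mul_apply]
    rfl

theorem eq_zero_of_forall_sum_mul_pow_apply_eq_zero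
    [DecidableEq K] (hσ : ∀ z, σ z = z → z ∈ Set.range (algebraMap F K))
    {ι : Type*} [Fintype ι] (d : ℕ) {v : ι → K} (hv : LinearIndependent F v) {c : ι → K}
    (hc : #{i | c i ≠ 0} ≤ d)
    (h : ∀ l < d, ∑ i, c i * (σ ^ l) (v i) = 0) : c = 0 := by
  classical
  induction d generalizing v c with
  | zero =>
    funext i
    by_contra hi
    exact (card_pos.2 ⟨i, by simpa using hi⟩).ne' (Nat.le_zero.1 hc)
  | succ d ih =>
    by_contra hne
    obtain ⟨i₀, hi₀⟩ := Function.ne_iff.1 hne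
    -- Eliminating `i₀` between `σ` of the relations and the relations themselves keeps them
    -- valid for `σ ∘ v` and shrinks the support, so the new coefficients vanish by induction;
    -- then every `c i / c i₀` is `σ`-fixed, i.e. lies in `F`, contradicting independence of `v`.
    set μ : ι → K := fun i => σ (c i) * c i₀ - c i * σ (c i₀)
    have hμ_card : #{i | μ i ≠ 0} ≤ d := by
      have hsub : ({i | μ i ≠ 0} : Finset ι) ⊆ ({i | c i ≠ 0} : Finset ι).erase i₀ := by
        intro i hi
        simp only [mem_erase, mem_filter, mem_univ, true_and] at hi ⊢
        refine ⟨?_, fun hci => hi ?_⟩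
        · rintro rfl
          exact hi (by simp only [μ]; ring)
        · simp only [μ, hci, map_zero]; ring
      have := card_le_card hsub
      rw [card_erase_of_mem (by simpa using hi₀)] at this
      omega
    have hμ_eq : ∀ l < d, ∑ i, μ i * (σ ^ l) ((σ ∘ v) i) = 0 := by
      intro l hl
      have hterm : ∀ i, μ i * (σ ^ l) (σ (v i)) =
          c i₀ * σ (c i * (σ ^ l) (v i)) - σ (c i₀) * (c i * (σ ^ (l + 1)) (v i)) := by
        intro i
        rw [map_mul, ← AlgHom.mul_apply σ, ← pow_succ', ← AlgHom.mul_apply _ σ, ← pow_succ]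
        ring
      simp only [Function.comp_apply, hterm, sum_sub_distrib, ← mul_sum, ← map_sum,
        h l (by omega), h (l + 1) (by omega), map_zero, mul_zero, sub_zero]
    have hμ := ih (hv.map' σ.toLinearMap (LinearMap.ker_eq_bot.2 σ.toRingHom.injective))
      hμ_card hμ_eq
    have hfixed : ∀ i, c i / c i₀ ∈ Set.range (algebraMap F K) := by
      intro i
      apply hσ
      rw [map_div₀, div_eq_div_iff ((map_ne_zero σ).2 hi₀) hi₀]
      exact sub_eq_zero.1 (congrFun hμ i)
    choose g hg using hfixed
    have hsum : ∑ i, g i • v i = 0 := by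
      have h0 := h 0 d.succ_pos
      simp only [pow_zero, AlgHom.one_apply] at h0
      have hc : ∀ i, c i * v i = c i₀ * g i • v i := fun i => by
        rw [Algebra.smul_def, hg, ← mul_assoc, mul_div_cancel₀ _ hi₀]
      simp only [hc, ← mul_sum] at h0
      exact (mul_eq_zero.1 h0).resolve_left hi₀
    have hg₀ : algebraMap F K (g i₀) = 1 := by rw [hg, div_self hi₀]
    rw [Fintype.linearIndependent_iff.1 hv g hsum i₀, map_zero] at hg₀
    exact zero_ne_one hg₀

def mooreMatrix {t : ℕ} (v : Fin t → K) : Matrix (Fin t) (Fin t) K :=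
  Matrix.of fun l r => (σ ^ (l : ℕ)) (v r)

theorem det_mooreMatrix_ne_zero (hσ : ∀ z, σ z = z → z ∈ Set.range (algebraMap F K)) {t : ℕ}
    {v : Fin t → K} (hv : LinearIndependent F v) : (mooreMatrix σ v).det ≠ 0 := by
  classical
  rw [Ne, ← Matrix.exists_mulVec_eq_zero_iff]
  rintro ⟨c, hc, hMc⟩
  refine hc (eq_zero_of_forall_sum_mul_pow_apply_eq_zero σ hσ t hv
    ((card_filter_le _ _).trans_eq (card_fin t)) fun l hl => ?_)
  simpa [mooreMatrix, Matrix.mulVec, dotProduct, mul_comm] using congrFun hMc ⟨l, hl⟩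

theorem eq_zero_of_forall_twistedEval_eq_zero
    (hσ : ∀ z, σ z = z → z ∈ Set.range (algebraMap F K)) {t : ℕ} {v : Fin t → K}
    (hv : LinearIndependent F v) {p : K[X]} (hp : p.degree < t)
    (h : ∀ r, twistedEval σ (v r) p = 0) : p = 0 := by
  have hcoeff : Matrix.vecMul (fun l : Fin t => p.coeff l) (mooreMatrix σ v) = 0 :=
    funext fun r => by
      simp [← h r, twistedEval_eq_sum_fin σ hp, mooreMatrix, Matrix.vecMul, dotProduct]
  ext l
  by_cases hl : l < t
  · by_contra hne
    exact det_mooreMatrix_ne_zero σ hσ hv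
      (Matrix.exists_vecMul_eq_zero_iff.1 ⟨_, Function.ne_iff.2 ⟨⟨l, hl⟩, hne⟩, hcoeff⟩)
  · exact coeff_eq_zero_of_degree_lt (hp.trans_le (by exact_mod_cast not_lt.1 hl))

/-- For `σ = (· ^ q ^ s)` these are the maps agreeing on `U` with a member of `G_{k,s}`. -/
def twistedPolyOn (k : ℕ) (U : Set K) : Submodule K (K → K) where
  carrier := {f | ∃ p ∈ degreeLT K k, ∀ u ∈ U, f u = twistedEval σ u p}
  add_mem' := by
    rintro f g ⟨p, hp, hpf⟩ ⟨p', hp', hp'g⟩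
    exact ⟨p + p', add_mem hp hp', fun u hu => by simp [hpf u hu, hp'g u hu]⟩
  zero_mem' := ⟨0, zero_mem _, fun u _ => by simp⟩
  smul_mem' := by
    rintro a f ⟨p, hp, hpf⟩
    exact ⟨a • p, Submodule.smul_mem _ a hp, fun u hu => by simp [hpf u hu]⟩

theorem mem_twistedPolyOn_of_eq_sum {k : ℕ} {U : Set K} {f : K → K} (b : ℕ → K)
    (h : ∀ u ∈ U, f u = ∑ i ∈ range k, b i * (σ ^ i) u) : f ∈ twistedPolyOn σ k U := by
  refine ⟨∑ i ∈ range k, monomial i (b i), sum_mem fun i hi => ?_, fun u hu => ?_⟩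
  · exact mem_degreeLT.2 ((degree_monomial_le _ _).trans_lt (by exact_mod_cast mem_range.1 hi))
  · simp [h u hu, twistedEval_monomial]

theorem exists_pow_apply_eq_mul_of_pow_add_mem_twistedPolyOn
    (hσ : ∀ z, σ z = z → z ∈ Set.range (algebraMap F K)) {k : ℕ} (hk : 0 < k) {U : Set K}
    {v : Fin (k + 1) → K} (hv : LinearIndependent F v) (hvU : ∀ r, v r ∈ U) {i : ℕ}
    (h : ∀ j < k, ⇑(σ ^ (i + j)) ∈ twistedPolyOn σ k U) :
    ∃ c, ∀ u ∈ U, (σ ^ i) u = c * u := by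
  obtain ⟨p, hp, hpU⟩ := h 0 hk
  rw [mem_degreeLT] at hp
  rw [add_zero] at hpU
  suffices hdeg : p.natDegree = 0 by
    refine ⟨p.coeff 0, fun u hu => ?_⟩
    rw [← twistedEval_C σ, ← eq_C_of_natDegree_eq_zero hdeg, ← hpU u hu]
  by_contra hdeg
  have hp0 : p ≠ 0 := by rintro rfl; exact hdeg natDegree_zero
  have hlt : p.natDegree < k := (natDegree_lt_iff_degree_lt hp0).2 hp
  set j := k - p.natDegree
  obtain ⟨p', hp', hp'U⟩ := h j (by omega)
  rw [mem_degreeLT] at hp'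
  have hshift : (p.map (σ ^ j).toRingHom * X ^ j).degree = (k : WithBot ℕ) := by
    rw [degree_mul, degree_X_pow, degree_map_eq_of_injective (RingHom.injective _),
      degree_eq_natDegree hp0]
    exact_mod_cast (by omega : p.natDegree + j = k)
  have hP : (p.map (σ ^ j).toRingHom * X ^ j - p').degree = (k : WithBot ℕ) := by
    rw [degree_sub_eq_left_of_degree_lt (hshift ▸ hp'), hshift]
  have hP0 := eq_zero_of_forall_twistedEval_eq_zero σ hσ hv
    (hP.trans_lt (by exact_mod_cast k.lt_succ_self)) fun r => by
      rw [map_sub, twistedEval_map_mul_X_pow σ (v r) j p, ← hpU _ (hvU r), ← hp'U _ (hvU r),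
        ← AlgHom.mul_apply, ← pow_add, add_comm, sub_self]
  rw [hP0, degree_zero] at hP
  exact WithBot.bot_ne_coe hP

end TwistedPolynomial

theorem LinearIndependent.span_range_flip_eq_top {K ι X : Type*} [Field K] [Finite ι]
    {f : ι → X → K} (hf : LinearIndependent K f) :
    Submodule.span K (Set.range (flip f)) = ⊤ := by
  classical
  have := Fintype.ofFinite ι
  by_contra hne
  obtain ⟨g, hg0, hg⟩ := Submodule.exists_le_ker_of_lt_top _ (lt_top_iff_ne_top.2 hne)
  have hcoeff := Fintype.linearIndependent_iff.1 hf (fun i => g fun j => if i = j then 1 else 0)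
    (funext fun x => by
      have hx : g (flip f x) = 0 := hg (Submodule.subset_span ⟨x, rfl⟩)
      rw [LinearMap.pi_apply_eq_sum_univ] at hx
      simpa [flip, mul_comm] using hx)
  exact hg0 (LinearMap.ext fun w => by simp [LinearMap.pi_apply_eq_sum_univ g w, hcoeff])

section AlgHomFamily

variable {F K ι : Type*} [Field F] [Field K] [Algebra F K] [Fintype ι] {τ : ι → K →ₐ[F] K}

theorem exists_eq_sum_mul_algHom_apply [FiniteDimensional F K] (hτ : Function.Injective τ)
    (hcard : Fintype.card ι = Module.finrank F K) (φ : K →ₗ[F] K) :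
    ∃ d : ι → K, ∀ x, φ x = ∑ i, d i * τ i x := by
  have hspan := ((linearIndependent_algHom_toLinearMap F K K).comp τ hτ)
    |>.span_eq_top_of_card_eq_finrank' (by rw [hcard, Module.finrank_linearMap_self])
  obtain ⟨d, hd⟩ :=
    (Submodule.mem_span_range_iff_exists_fun K).1 (hspan ▸ Submodule.mem_top (x := φ))
  exact ⟨d, fun x => by simp [← hd]⟩

theorem algHom_comp_mem_of_forall_mul_mem [Fintype K] (hτ : Function.Injective τ) {d : ι → K}
    {φ : K → K} (hφ : ∀ x, φ x = ∑ i, d i * τ i x) {V : Submodule K (K → K)} {g : K → K}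
    (hV : ∀ a, (fun u => φ (a * g u)) ∈ V) {i₀ : ι} (hi₀ : d i₀ ≠ 0) : τ i₀ ∘ g ∈ V := by
  classical
  have hli : LinearIndependent K fun i => ⇑(τ i) :=
    (linearIndependent_monoidHom K K).comp (fun i => (τ i : K →* K))
      fun i j hij => hτ (AlgHom.ext fun x => by simpa using DFunLike.congr_fun hij x)
  obtain ⟨c, hc⟩ := (Submodule.mem_span_range_iff_exists_fun K).1
    (hli.span_range_flip_eq_top ▸ Submodule.mem_top (x := (Pi.single i₀ 1 : ι → K)))
  have hsel : ∀ i, ∑ a, c a * τ i a = if i = i₀ then 1 else 0 := fun i => by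
    have := congrFun hc i
    simp only [Finset.sum_apply, Pi.smul_apply, flip, smul_eq_mul] at this
    rw [this, Pi.single_apply]
  have hcomb : τ i₀ ∘ g = (d i₀)⁻¹ • ∑ a, c a • fun u => φ (a * g u) := by
    funext u
    simp only [Function.comp_apply, Pi.smul_apply, Finset.sum_apply, smul_eq_mul, hφ, map_mul,
      mul_sum]
    rw [sum_comm]
    simp_rw [show ∀ i a, (d i₀)⁻¹ * (c a * (d i * (τ i a * τ i (g u)))) =
      (d i₀)⁻¹ * d i * τ i (g u) * (c a * τ i a) from fun _ _ => by ring, ← mul_sum, hsel,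
      mul_ite, mul_one, mul_zero, sum_ite_eq', mem_univ, if_true, inv_mul_cancel₀ hi₀, one_mul]
  rw [hcomb]
  exact V.smul_mem _ (V.sum_mem fun a _ => V.smul_mem _ (hV a))

end AlgHomFamily

section FiniteField

open FiniteField

variable {F K : Type*} [Field F] [Fintype F] [Field K] [Algebra F K]

theorem frobeniusAlgHom_pow_apply (i : ℕ) (x : K) :
    (frobeniusAlgHom F K ^ i) x = x ^ Fintype.card F ^ i := by
  rw [AlgHom.coe_pow, coe_frobeniusAlgHom, pow_iterate]

variable [Finite K]

theorem injective_frobeniusAlgHom_pow_pow {s : ℕ} (hs : (Module.finrank F K).Coprime s) :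
    Function.Injective fun i : Fin (Module.finrank F K) =>
      (frobeniusAlgHom F K ^ s) ^ (i : ℕ) := by
  have horder : orderOf (frobeniusAlgHom F K ^ s) = Module.finrank F K := by
    rw [Nat.Coprime.orderOf_pow (by rwa [orderOf_frobeniusAlgHom]), orderOf_frobeniusAlgHom]
  intro i j hij
  exact Fin.ext (pow_injOn_Iio_orderOf (by simp [horder]) (by simp [horder]) hij)

theorem mem_range_algebraMap_of_frobeniusAlgHom_pow_apply_eq {s : ℕ}
    (hs : (Module.finrank F K).Coprime s) {z : K} (hz : (frobeniusAlgHom F K ^ s) z = z) :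
    z ∈ Set.range (algebraMap F K) := by
  have hs' : Function.IsPeriodicPt (frobeniusAlgHom F K) s z := by
    rwa [Function.IsPeriodicPt, Function.IsFixedPt, ← AlgHom.coe_pow]
  have hn : Function.IsPeriodicPt (frobeniusAlgHom F K) (Module.finrank F K) z := by
    rw [Function.IsPeriodicPt, Function.IsFixedPt, ← AlgHom.coe_pow, ← orderOf_frobeniusAlgHom,
      pow_orderOf_eq_one, AlgHom.one_apply]
  have hfix : frobeniusAlgHom F K z = z := by
    simpa [hs, Function.IsPeriodicPt, Function.IsFixedPt] using hn.gcd hs'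
  rw [IsGalois.mem_range_algebraMap_iff_fixed]
  intro g
  obtain ⟨i, rfl⟩ := (bijective_frobeniusAlgEquivOfAlgebraic_pow F K).2 g
  rw [AlgEquiv.coe_pow]
  exact Function.iterate_fixed hfix i

end FiniteField

theorem stmt3_general (q n m k s : ℕ) (Fq Fqn : Type) [Field Fq] [Fintype Fq] [Field Fqn] [Fintype Fqn]
    [Algebra Fq Fqn] (hq : Fintype.card Fq = q) (hqn : Fintype.card Fqn = q ^ n)
    (hk : 0 < k) (hkm : k < m)
    (hgcd : Nat.gcd n s = 1)
    (α : Fin m → Fqn) (hα : LinearIndependent Fq α)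
    (φ : Fqn →ₗ[Fq] Fqn)
    -- for every f ∈ G_{k,s} there is g ∈ G_{k,s} with φ(f(u)) = g(u) for all u ∈ U_S
    (hφ : ∀ a : ℕ → Fqn, ∃ b : ℕ → Fqn, ∀ u ∈ Submodule.span Fq (Set.range α),
        φ (∑ i ∈ Finset.range k, a i * u ^ q ^ (s * i))
          = ∑ i ∈ Finset.range k, b i * u ^ q ^ (s * i)) :
    ∀ a : Fqn, ∃ b : Fqn, ∀ u ∈ Submodule.span Fq (Set.range α), φ (a * u) = b * u := by
  subst hq
  obtain rfl : Module.finrank Fq Fqn = n :=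
    Nat.pow_right_injective (Fintype.one_lt_card (α := Fq))
      (by simp only [← hqn]; exact Module.card_eq_pow_finrank.symm)
  set σ := FiniteField.frobeniusAlgHom Fq Fqn ^ s
  set U := Submodule.span Fq (Set.range α)
  have hσ_apply : ∀ i (u : Fqn), (σ ^ i) u = u ^ Fintype.card Fq ^ (s * i) := fun i u => by
    rw [← pow_mul, frobeniusAlgHom_pow_apply]
  simp_rw [← hσ_apply] at hφ
  have hτ := injective_frobeniusAlgHom_pow_pow hgcd
  obtain ⟨d, hd⟩ := exists_eq_sum_mul_algHom_apply hτ (Fintype.card_fin _) φ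
  have hmem : ∀ i, d i ≠ 0 → ∀ j < k, ⇑(σ ^ ((i : ℕ) + j)) ∈ twistedPolyOn σ k U := by
    intro i hi j hj
    rw [pow_add]
    change ⇑(σ ^ (i : ℕ)) ∘ ⇑(σ ^ j) ∈ _
    refine algHom_comp_mem_of_forall_mul_mem hτ hd (fun a => ?_) hi
    obtain ⟨b, hb⟩ := hφ fun l => if l = j then a else 0
    exact mem_twistedPolyOn_of_eq_sum σ b fun u hu => by simpa [ite_mul, hj] using hb u hu
  have hscalar : ∀ i, d i ≠ 0 → ∃ c, ∀ u ∈ U, (σ ^ (i : ℕ)) u = c * u := fun i hi =>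
    exists_pow_apply_eq_mul_of_pow_add_mem_twistedPolyOn σ
      (fun _ => mem_range_algebraMap_of_frobeniusAlgHom_pow_apply_eq hgcd) hk
      (hα.comp _ (Fin.castLE_injective hkm))
      (fun r => Submodule.subset_span (Set.mem_range_self (Fin.castLE hkm r))) (hmem i hi)
  choose! c hc using hscalar
  intro a
  refine ⟨∑ i, d i * (σ ^ (i : ℕ)) a * c i, fun u hu => ?_⟩
  rw [hd, sum_mul]
  refine sum_congr rfl fun i _ => ?_
  rcases eq_or_ne (d i) 0 with hi | hi
  · simp [hi]
  · rw [map_mul, hc i hi u hu]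
    ring

theorem stmt3 (q n m k s : ℕ) (Fq Fqn : Type) [Field Fq] [Fintype Fq] [Field Fqn] [Fintype Fqn]
    [Algebra Fq Fqn] (hq : Fintype.card Fq = q) (hqn : Fintype.card Fqn = q ^ n)
    (hn : 0 < n) (hk : 0 < k) (hkm : k < m) (hmn : m ≤ n)
    (hs : 0 < s) (hgcd : Nat.gcd n s = 1)
    (α : Fin m → Fqn) (hα : LinearIndependent Fq α)
    (φ : Fqn →ₗ[Fq] Fqn)
    -- for every f ∈ G_{k,s} there is g ∈ G_{k,s} with φ(f(u)) = g(u) for all u ∈ U_S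
    (hφ : ∀ a : ℕ → Fqn, ∃ b : ℕ → Fqn, ∀ u ∈ Submodule.span Fq (Set.range α),
        φ (∑ i ∈ Finset.range k, a i * u ^ q ^ (s * i))
          = ∑ i ∈ Finset.range k, b i * u ^ q ^ (s * i)) :
    ∀ a : Fqn, ∃ b : Fqn, ∀ u ∈ Submodule.span Fq (Set.range α), φ (a * u) = b * u :=
  stmt3_general q n m k s Fq Fqn hq hqn hk hkm hgcd α hα φ hφ
end

section
/- Let k = 2 and m = n = 4, so that U_S = F_{q^4}. Let H_{2,s}(η,h) and H_{2,s}(η̃,h̃) be generalized twisted Gabidulin codes with η ≠ 0 and η̃ ≠ 0, and assume η̃^{q^{2s}+1} · η^{q^{3s}+q^s} ≠ 1 (in particular this holds whenever η̃ = η). Let ψ : F_{q^n} → F_{q^n} be an F_q-linear map such that for every f ∈ H_{2,s}(η,h) there exists g ∈ H_{2,s}(η̃,h̃) with f(ψ(u)) = g(u) for all u ∈ F_{q^n}. Then there exists b ∈ F_{q^n} such that ψ(u) = b·u for all u ∈ F_{q^n}. -/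
/-!
Since `gcd(s, 4) = 1`, `σ : x ↦ x^{q^s}` generates `Gal(F_{q^4}/F_q)`, so by Dedekind's
independence of characters every `F_q`-linear `ψ` is `b₀ + b₁σ + b₂σ² + b₃σ³`. Expanding `f ∘ ψ`
for `f = a₀ + a₁σ + η a₀^{q^h} σ²` in the same basis and comparing with `g ∈ H_{2,s}(η̃, h̃)`, the
coefficient of `σ³` must vanish and that of `σ²` is determined by that of `1`. Letting `a₀, a₁` vary
forces `b₂ = 0` and then `b₁ = b₃ = 0`: by independence of `1` and `x ↦ x^{q^h}` if `h ≠ 0` (or of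
`1` and `x ↦ x^{q^{h̃}}` if `h̃ ≠ 0`), and if `h = h̃ = 0` because `σ(b₁)` is a fixed point of
`y ↦ t σ²(y)` with `t σ²(t) = η̃^{q^{2s}+1} η^{q^{3s}+q^s} ≠ 1`.
-/

open Finset

/-- The value at `x` of the polynomial
`a₀X + a₁X^{q^s} + ⋯ + a_{k-1}X^{q^{s(k-1)}} + η a₀^{q^h} X^{q^{sk}}`
belonging to the generalized twisted Gabidulin code `H_{k,s}(η,h)`. -/
def Hval (q s k h : ℕ) {F : Type} [Field F] (η : F) (a : ℕ → F) (x : F) : F :=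
  (∑ i ∈ Finset.range k, a i * x ^ q ^ (s * i)) + η * a 0 ^ q ^ h * x ^ q ^ (s * k)

open Module

theorem injective_pow_fin_of_orderOf_eq {G : Type*} [Monoid G] {x : G} {n : ℕ}
    (hx : orderOf x = n) : Function.Injective fun i : Fin n => x ^ (i : ℕ) :=
  fun i j hij => Fin.ext <| pow_injOn_Iio_orderOf (by simp [hx]) (by simp [hx]) hij

section Dedekind

variable {K L : Type*} [Field K] [Field L] [Algebra K L]

theorem eq_zero_of_forall_sum_mul_apply_eq_zero {ι : Type*} [Fintype ι] {e : ι → Gal(L/K)}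
    (he : Function.Injective e) {c : ι → L} (h : ∀ u, ∑ i, c i * e i u = 0) : c = 0 := by
  have hli : LinearIndependent L fun i => ⇑(e i : L →* L) :=
    (linearIndependent_monoidHom L L).comp _ fun i j hij =>
      he (AlgEquiv.ext fun x => DFunLike.congr_fun hij x)
  funext i
  exact Fintype.linearIndependent_iff.mp hli c (funext fun u => by simpa using h u) i

theorem exists_sum_mul_apply_eq_of_card_eq_finrank [FiniteDimensional K L] {ι : Type*}
    [Fintype ι] {e : ι → Gal(L/K)} (he : Function.Injective e)
    (hcard : Fintype.card ι = finrank K L) (ψ : L →ₗ[K] L) :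
    ∃ b : ι → L, ∀ u, ψ u = ∑ i, b i * e i u := by
  have hli : LinearIndependent L fun i => (e i : L →ₐ[K] L).toLinearMap :=
    (linearIndependent_toLinearMap K L L).comp _ (AlgEquiv.coe_toAlgHom_injective.comp he)
  have hspan := hli.span_eq_top_of_card_eq_finrank'
    (hcard.trans (finrank_linearMap_self K L L).symm)
  obtain ⟨b, hb⟩ :=
    (Submodule.mem_span_range_iff_exists_fun L).mp (hspan ▸ Submodule.mem_top (x := ψ))
  exact ⟨b, fun u => by simp [← hb]⟩

theorem eq_zero_of_forall_mul_add_mul_apply_eq_zero {τ : Gal(L/K)} (hτ : τ ≠ 1) {x y : L}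
    (h : ∀ u, x * u + y * τ u = 0) : x = 0 ∧ y = 0 := by
  have he : Function.Injective ![1, τ] := by
    simpa [Function.Injective, Fin.forall_fin_two] using ⟨Ne.symm hτ, hτ⟩
  have := eq_zero_of_forall_sum_mul_apply_eq_zero he (c := ![x, y]) (by simpa using h)
  simpa [funext_iff, Fin.forall_fin_two] using this

section OrderFour

variable {σ : Gal(L/K)}

theorem apply_four_times_of_orderOf_eq_four (hσ : orderOf σ = 4) (x : L) :
    σ (σ (σ (σ x))) = x := by
  have h1 : σ ^ 4 = 1 := hσ ▸ pow_orderOf_eq_one σ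
  simpa [pow_succ] using DFunLike.congr_fun h1 x

theorem eq_zero_of_forall_add_mul_apply_eq_zero (hσ : orderOf σ = 4) {d₀ d₁ d₂ d₃ : L}
    (h : ∀ u, d₀ * u + d₁ * σ u + d₂ * σ (σ u) + d₃ * σ (σ (σ u)) = 0) :
    d₀ = 0 ∧ d₁ = 0 ∧ d₂ = 0 ∧ d₃ = 0 := by
  have := eq_zero_of_forall_sum_mul_apply_eq_zero (injective_pow_fin_of_orderOf_eq hσ)
    (c := ![d₀, d₁, d₂, d₃]) (by simpa [Fin.sum_univ_four, pow_succ] using h)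
  simpa [funext_iff, Fin.forall_fin_succ] using this

theorem exists_eq_add_mul_apply (hrank : finrank K L = 4) (hσ : orderOf σ = 4)
    (ψ : L →ₗ[K] L) :
    ∃ b₀ b₁ b₂ b₃ : L, ∀ u, ψ u = b₀ * u + b₁ * σ u + b₂ * σ (σ u) + b₃ * σ (σ (σ u)) := by
  have : FiniteDimensional K L := Module.finite_of_finrank_pos (by omega)
  obtain ⟨b, hb⟩ := exists_sum_mul_apply_eq_of_card_eq_finrank
    (injective_pow_fin_of_orderOf_eq hσ) (by simp [hrank]) ψ
  exact ⟨b 0, b 1, b 2, b 3, fun u => by simp [hb, Fin.sum_univ_four]⟩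

end OrderFour

end Dedekind

theorem eq_zero_of_eq_mul_apply_of_involutive {R F : Type*} [CommRing R] [IsDomain R]
    [FunLike F R R] [RingHomClass F R R] {ρ : F} (hρ : Function.Involutive ρ) {t y : R}
    (ht : t * ρ t ≠ 1) (hy : y = t * ρ y) : y = 0 := by
  have hρy : ρ y = ρ t * y := by simpa only [map_mul, hρ y] using congrArg ρ hy
  have : y * (t * ρ t - 1) = 0 := by linear_combination -hy - t * hρy
  exact (mul_eq_zero.mp this).resolve_right (sub_ne_zero.mpr ht)

section TwistedGabidulin

variable {K L : Type*} [Field K] [Field L] [Algebra K L] {σ τ τ' : Gal(L/K)}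

/-- `Hval q s 2 h η a` with `σ = Frob^s`, `τ = Frob^h`, `a₀ = a 0`, `a₁ = a 1`
(`Hval_two_eq_twistedGabEval`). -/
def twistedGabEval (σ τ : Gal(L/K)) (η a₀ a₁ x : L) : L :=
  a₀ * x + a₁ * σ x + η * τ a₀ * σ (σ x)

theorem coeffs_of_twistedGabEval_comp (hσ : orderOf σ = 4) {η η' a₀ a₁ d₀ d₁ b₀ b₁ b₂ b₃ : L}
    (h : ∀ u, twistedGabEval σ τ η a₀ a₁ (b₀ * u + b₁ * σ u + b₂ * σ (σ u) + b₃ * σ (σ (σ u)))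
      = twistedGabEval σ τ' η' d₀ d₁ u) :
    a₀ * b₂ + a₁ * σ b₁ + η * τ a₀ * σ (σ b₀)
        = η' * τ' (a₀ * b₀ + a₁ * σ b₃ + η * τ a₀ * σ (σ b₂)) ∧
      a₀ * b₃ + a₁ * σ b₂ + η * τ a₀ * σ (σ b₁) = 0 := by
  obtain ⟨h₀, -, h₂, h₃⟩ := eq_zero_of_forall_add_mul_apply_eq_zero hσ
    (d₀ := a₀ * b₀ + a₁ * σ b₃ + η * τ a₀ * σ (σ b₂) - d₀)
    (d₁ := a₀ * b₁ + a₁ * σ b₀ + η * τ a₀ * σ (σ b₃) - d₁)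
    (d₂ := a₀ * b₂ + a₁ * σ b₁ + η * τ a₀ * σ (σ b₀) - η' * τ' d₀)
    (d₃ := a₀ * b₃ + a₁ * σ b₂ + η * τ a₀ * σ (σ b₁)) fun u => by
      have hu := h u
      simp only [twistedGabEval, map_add, map_mul, apply_four_times_of_orderOf_eq_four hσ] at hu
      linear_combination hu
  rw [sub_eq_zero] at h₀ h₂
  exact ⟨h₀ ▸ h₂, h₃⟩

theorem eq_zero_of_twistedGabEval_coeffs (hσ : orderOf σ = 4) {η η' b₀ b₁ b₂ b₃ : L}
    (hη : η ≠ 0) (hprod : σ (σ η') * η' * (σ (σ (σ η)) * σ η) ≠ 1)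
    (h : ∀ a₀ a₁, a₀ * b₂ + a₁ * σ b₁ + η * τ a₀ * σ (σ b₀)
        = η' * τ' (a₀ * b₀ + a₁ * σ b₃ + η * τ a₀ * σ (σ b₂)) ∧
      a₀ * b₃ + a₁ * σ b₂ + η * τ a₀ * σ (σ b₁) = 0) :
    b₁ = 0 ∧ b₂ = 0 ∧ b₃ = 0 := by
  have hb₂ : b₂ = 0 := by simpa using (h 0 1).2
  have hlin : ∀ a, b₃ * a + η * σ (σ b₁) * τ a = 0 := fun a => by linear_combination (h a 0).2
  by_cases hτ : τ = 1
  · subst hτ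
    have hb₃ : b₃ = -(η * σ (σ b₁)) := by
      linear_combination (by simpa using hlin 1 : b₃ + η * σ (σ b₁) = 0)
    have hc : ∀ c, σ b₁ * c + -(η' * τ' (σ b₃)) * τ' c = 0 := fun c => by
      have := (h 0 c).1
      simp only [hb₂, map_zero, map_mul, mul_zero, zero_mul, zero_add, add_zero] at this
      linear_combination this
    have hσb₁ : σ b₁ = 0 := by
      by_cases hτ' : τ' = 1
      · -- `y := σ b₁` satisfies `y = t σ²(y)` for `t = -η' σ(η)`, and `t σ²(t) ≠ 1` is `hprod`.
        subst hτ'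
        have hσ4 := apply_four_times_of_orderOf_eq_four hσ
        refine eq_zero_of_eq_mul_apply_of_involutive (ρ := σ ^ 2) (t := -(η' * σ η))
          (fun x => by simp [sq, hσ4]) ?_ ?_
        · convert hprod using 1
          simp only [sq, AlgEquiv.mul_apply, map_neg, map_mul]
          ring
        · have := hc 1
          simp only [hb₃, AlgEquiv.one_apply, map_neg, map_mul] at this
          simp only [sq, AlgEquiv.mul_apply]
          linear_combination this
      · exact (eq_zero_of_forall_mul_add_mul_apply_eq_zero hτ' hc).1
    simp_all
  · obtain ⟨hb₃, hb₁⟩ := eq_zero_of_forall_mul_add_mul_apply_eq_zero hτ hlin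
    simp_all

theorem exists_eq_mul_of_forall_twistedGabEval_comp (hrank : finrank K L = 4)
    (hσ : orderOf σ = 4) {η η' : L} (hη : η ≠ 0)
    (hprod : σ (σ η') * η' * (σ (σ (σ η)) * σ η) ≠ 1) (ψ : L →ₗ[K] L)
    (hψ : ∀ a₀ a₁, ∃ d₀ d₁, ∀ u,
      twistedGabEval σ τ η a₀ a₁ (ψ u) = twistedGabEval σ τ' η' d₀ d₁ u) :
    ∃ b, ∀ u, ψ u = b * u := by
  obtain ⟨b₀, b₁, b₂, b₃, hb⟩ := exists_eq_add_mul_apply hrank hσ ψ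
  obtain ⟨rfl, rfl, rfl⟩ := eq_zero_of_twistedGabEval_coeffs hσ hη hprod fun a₀ a₁ => by
    obtain ⟨d₀, d₁, h⟩ := hψ a₀ a₁
    exact coeffs_of_twistedGabEval_comp hσ (by simpa only [hb] using h)
  exact ⟨b₀, fun u => by simp [hb]⟩

end TwistedGabidulin

section FiniteField

open FiniteField

variable {K L : Type} [Field K] [Fintype K] [Field L] [Algebra K L] [Algebra.IsAlgebraic K L]

theorem frobeniusAlgEquivOfAlgebraic_pow_apply (m : ℕ) (x : L) :
    (frobeniusAlgEquivOfAlgebraic K L ^ m) x = x ^ Fintype.card K ^ m := by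
  rw [AlgEquiv.coe_pow, coe_frobeniusAlgEquivOfAlgebraic_iterate]

theorem Hval_two_eq_twistedGabEval (s h : ℕ) (η : L) (a : ℕ → L) (x : L) :
    Hval (Fintype.card K) s 2 h η a x = twistedGabEval (frobeniusAlgEquivOfAlgebraic K L ^ s)
      (frobeniusAlgEquivOfAlgebraic K L ^ h) η (a 0) (a 1) x := by
  simp only [Hval, twistedGabEval, sum_range_succ, sum_range_zero,
    frobeniusAlgEquivOfAlgebraic_pow_apply]
  ring_nf

end FiniteField

theorem stmt9_general (q s h h' : ℕ) (Fq Fqn : Type) [Field Fq] [Fintype Fq] [Field Fqn]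
    [Fintype Fqn] [Algebra Fq Fqn]
    (hq : Fintype.card Fq = q) (hqn : Fintype.card Fqn = q ^ 4)
    (hgcd : Nat.gcd 4 s = 1)
    (η η' : Fqn) (hη : η ≠ 0)
    -- η̃^{q^{2s}+1} · η^{q^{3s}+q^s} ≠ 1
    (hprod : η' ^ (q ^ (2 * s) + 1) * η ^ (q ^ (3 * s) + q ^ s) ≠ 1)
    (ψ : Fqn →ₗ[Fq] Fqn)
    -- for every f ∈ H_{2,s}(η,h) there is g ∈ H_{2,s}(η',h') with f(ψ(u)) = g(u)
    -- for all u ∈ F_{q^4}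
    (hψ : ∀ a : ℕ → Fqn, ∃ b : ℕ → Fqn, ∀ u : Fqn,
        Hval q s 2 h η a (ψ u) = Hval q s 2 h' η' b u) :
    ∃ b : Fqn, ∀ u : Fqn, ψ u = b * u := by
  subst hq
  set φ := FiniteField.frobeniusAlgEquivOfAlgebraic Fq Fqn with hφ
  have hrank : finrank Fq Fqn = 4 :=
    Nat.pow_right_injective Fintype.one_lt_card (card_eq_pow_finrank.symm.trans hqn)
  have hφ4 : orderOf φ = 4 := (FiniteField.orderOf_frobeniusAlgEquivOfAlgebraic Fq Fqn).trans hrank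
  have hσ : orderOf (φ ^ s) = 4 := (Nat.Coprime.orderOf_pow (hφ4 ▸ hgcd)).trans hφ4
  refine exists_eq_mul_of_forall_twistedGabEval_comp (τ := φ ^ h) (τ' := φ ^ h') (η' := η')
    hrank hσ hη ?_ ψ fun a₀ a₁ => ?_
  · convert hprod using 1
    simp only [hφ, frobeniusAlgEquivOfAlgebraic_pow_apply]
    ring_nf
  · obtain ⟨b, hb⟩ := hψ fun i => if i = 0 then a₀ else a₁
    exact ⟨b 0, b 1, by simpa [Hval_two_eq_twistedGabEval] using hb⟩

theorem stmt9 (q s h h' : ℕ) (Fq Fqn : Type) [Field Fq] [Fintype Fq] [Field Fqn]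
    [Fintype Fqn] [Algebra Fq Fqn]
    (hq : Fintype.card Fq = q) (hqn : Fintype.card Fqn = q ^ 4)
    (hs : 0 < s) (hgcd : Nat.gcd 4 s = 1) (hh : h < 4) (hh' : h' < 4)
    (η η' : Fqn) (hη : η ≠ 0) (hη' : η' ≠ 0)
    (hηnorm : η ^ ((q ^ (s * 4) - 1) / (q ^ s - 1)) ≠ (-1 : Fqn) ^ (4 * 2))
    (hη'norm : η' ^ ((q ^ (s * 4) - 1) / (q ^ s - 1)) ≠ (-1 : Fqn) ^ (4 * 2))
    -- η̃^{q^{2s}+1} · η^{q^{3s}+q^s} ≠ 1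
    (hprod : η' ^ (q ^ (2 * s) + 1) * η ^ (q ^ (3 * s) + q ^ s) ≠ 1)
    -- S consists of m = n = 4 linearly independent elements, so U_S = F_{q^4}
    (α : Fin 4 → Fqn) (hα : LinearIndependent Fq α)
    (ψ : Fqn →ₗ[Fq] Fqn)
    -- for every f ∈ H_{2,s}(η,h) there is g ∈ H_{2,s}(η',h') with f(ψ(u)) = g(u)
    -- for all u ∈ F_{q^4}
    (hψ : ∀ a : ℕ → Fqn, ∃ b : ℕ → Fqn, ∀ u : Fqn,
        Hval q s 2 h η a (ψ u) = Hval q s 2 h' η' b u) :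
    ∃ b : Fqn, ∀ u : Fqn, ψ u = b * u :=
  stmt9_general q s h h' Fq Fqn hq hqn hgcd η η' hη hprod ψ hψ
end

section
/- Let k, m, n be positive integers with k < m ≤ n and gcd(n,s) = 1, and let K = {c ∈ F_{q^n} : c·u ∈ U_S for all u ∈ U_S}, which is the largest subfield F_{q^ℓ} of F_{q^n} over which U_S is a vector space. Then an F_q-linear map ψ : F_{q^n} → F_{q^n} with ψ(U_S) ⊆ U_S satisfies [for every f ∈ G_{k,s} there exists g ∈ G_{k,s} with f(ψ(u)) = g(u) for all u ∈ U_S] if and only if there exists c ∈ K such that ψ(u) = c·u for all u ∈ U_S. That is, the middle nucleus of π_S(G_{k,s}) is {c·X : c ∈ F_{q^ℓ}}. -/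
/-!
Write `σ` for `x ↦ x ^ q ^ s`; since `gcd(n, s) = 1` its fixed field is `F_q`. A σ-polynomial
`Σ_{i ≤ k} a_i σ^i` vanishing on an `F_q`-subspace `V` with `dim V > k` has `a_k = 0`: after
rescaling by some `u ∈ V \ {0}` it vanishes at `1`, so it factors as `L' ∘ (σ - 1)` with `L'` of
σ-degree `k - 1` and the same top coefficient, and `σ - 1` drops at most one dimension of `V`
because its kernel is `F_q`.

If `ψ` lies in the middle nucleus, the choice `f = X` gives `ψ = Σ_{i<k} b_i σ^i` on `U_S`. If
`t > 0` were the largest index with `b_t ≠ 0`, then `σ^(k-t) ∘ ψ` would have σ-degree exactly `k`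
while agreeing on `U_S` with a σ-polynomial of σ-degree `< k`, which is impossible as
`dim U_S = m > k`. Hence `ψ = b_0 · id` on `U_S`.
-/

open Finset Module

section
variable {K L : Type*} [CommSemiring K] [CommRing L] [Algebra K L] (σ : L →ₐ[K] L)

theorem sum_mul_pow_apply_eq (a : ℕ → L) (N : ℕ) (x : L) :
    ∑ i ∈ range (N + 1), a i * (σ ^ i) x =
      (∑ i ∈ range (N + 1), a i) * x +
        ∑ j ∈ range N, (∑ i ∈ Ico (j + 1) (N + 1), a i) * (σ ^ j) (σ x - x) := by
  have telescope : ∀ i, (σ ^ i) x - x = ∑ j ∈ range i, (σ ^ j) (σ x - x) := by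
    intro i
    simp only [map_sub, ← AlgHom.mul_apply, ← pow_succ]
    rw [sum_range_sub (fun j => (σ ^ j) x), pow_zero, AlgHom.one_apply]
  calc ∑ i ∈ range (N + 1), a i * (σ ^ i) x
      = (∑ i ∈ range (N + 1), a i) * x + ∑ i ∈ range (N + 1), a i * ((σ ^ i) x - x) := by
        simp only [mul_sub, sum_sub_distrib, sum_mul]; ring
    _ = (∑ i ∈ range (N + 1), a i) * x +
          ∑ i ∈ range (N + 1), ∑ j ∈ range i, a i * (σ ^ j) (σ x - x) := by
        simp only [telescope, mul_sum]
    _ = _ := by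
        congr 1
        simp only [sum_mul]
        exact sum_comm' fun i j => by simp only [mem_range, mem_Ico]; omega

theorem sum_single_mul_pow_apply {k e : ℕ} (he : e < k) (y : L) :
    ∑ i ∈ range k, Pi.single (M := fun _ => L) e 1 i * (σ ^ i) y = (σ ^ e) y := by
  rw [sum_eq_single_of_mem e (mem_range.mpr he) fun i _ hi => by simp [hi], Pi.single_eq_same,
    one_mul]

end

theorem Submodule.finrank_le_finrank_map_add_finrank_ker {K M N : Type*} [Field K]
    [AddCommGroup M] [Module K M] [AddCommGroup N] [Module K N] [FiniteDimensional K M]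
    (f : M →ₗ[K] N) (V : Submodule K M) :
    finrank K V ≤ finrank K (V.map f) + finrank K (LinearMap.ker f) := by
  rw [← LinearMap.finrank_range_add_finrank_ker (f.domRestrict V), LinearMap.range_domRestrict,
    LinearMap.ker_domRestrict, ← Submodule.finrank_map_subtype_eq]
  gcongr
  exact Submodule.finrank_mono (Submodule.map_comap_le _ _)

section
variable {K L : Type*} [Field K] [Field L] [Algebra K L]

theorem ker_sub_comp_mulLeft_le_span {σ : L →ₐ[K] L}
    (hσ : ∀ x, σ x = x → x ∈ (⊥ : Subalgebra K L)) {u : L} (hu : u ≠ 0) :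
    LinearMap.ker ((σ.toLinearMap - LinearMap.id) ∘ₗ LinearMap.mulLeft K u⁻¹) ≤ K ∙ u := by
  intro x hx
  simp only [LinearMap.mem_ker, LinearMap.comp_apply, LinearMap.sub_apply, sub_eq_zero,
    LinearMap.mulLeft_apply, AlgHom.toLinearMap_apply, LinearMap.id_apply] at hx
  obtain ⟨c, hc⟩ := Algebra.mem_bot.mp (hσ _ hx)
  rw [Submodule.mem_span_singleton]
  refine ⟨c, ?_⟩
  rw [Algebra.smul_def, hc, mul_comm, mul_inv_cancel_left₀ hu]

variable [FiniteDimensional K L] {σ : L →ₐ[K] L}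

theorem coeff_eq_zero_of_sum_mul_pow_apply_eq_zero
    (hσ : ∀ x, σ x = x → x ∈ (⊥ : Subalgebra K L)) {k : ℕ} {a : ℕ → L} {V : Submodule K L}
    (hk : k < finrank K V) (h : ∀ x ∈ V, ∑ i ∈ range (k + 1), a i * (σ ^ i) x = 0) :
    a k = 0 := by
  induction k generalizing a V with
  | zero =>
    obtain ⟨u, huV, hu⟩ := Submodule.exists_mem_ne_zero_of_ne_bot
      (Submodule.one_le_finrank_iff.mp hk)
    simpa [hu] using h u huV
  | succ k ih =>
    obtain ⟨u, huV, hu⟩ := Submodule.exists_mem_ne_zero_of_ne_bot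
      (Submodule.one_le_finrank_iff.mp (k.succ_pos.trans hk))
    let f : L →ₗ[K] L := (σ.toLinearMap - LinearMap.id) ∘ₗ LinearMap.mulLeft K u⁻¹
    let b : ℕ → L := fun i => a i * (σ ^ i) u
    have hrescale : ∀ x, ∑ i ∈ range (k + 2), b i * (σ ^ i) (u⁻¹ * x) =
        ∑ i ∈ range (k + 2), a i * (σ ^ i) x := fun x =>
      sum_congr rfl fun i _ => by rw [mul_assoc, ← map_mul, mul_inv_cancel_left₀ hu]
    have hsum : ∑ i ∈ range (k + 2), b i = 0 := by
      simpa [sum_mul_pow_apply_eq σ b (k + 1) (u⁻¹ * u), inv_mul_cancel₀ hu] using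
        (hrescale u).trans (h u huV)
    have hW : k < finrank K (V.map f) := by
      have hker : finrank K (LinearMap.ker f) ≤ 1 :=
        (Submodule.finrank_mono (ker_sub_comp_mulLeft_le_span hσ hu)).trans
          (finrank_span_singleton hu).le
      have := Submodule.finrank_le_finrank_map_add_finrank_ker f V
      omega
    have := ih (a := fun j => ∑ i ∈ Ico (j + 1) (k + 2), b i) hW ?_
    · have htop : a (k + 1) * (σ ^ (k + 1)) u = 0 := by simpa [b] using this
      exact (mul_eq_zero.mp htop).resolve_right
        ((map_ne_zero_iff _ (σ ^ (k + 1)).injective).mpr hu)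
    · rintro _ ⟨x, hx, rfl⟩
      have := (hrescale x).trans (h x hx)
      rw [sum_mul_pow_apply_eq σ b (k + 1), hsum, zero_mul, zero_add] at this
      simpa [f] using this

theorem coeff_eq_zero_of_sum_mul_pow_apply_eq
    (hσ : ∀ x, σ x = x → x ∈ (⊥ : Subalgebra K L)) {k : ℕ} {a b : ℕ → L} {V : Submodule K L}
    (hk : k < finrank K V)
    (h : ∀ x ∈ V, ∑ i ∈ range (k + 1), a i * (σ ^ i) x = ∑ i ∈ range k, b i * (σ ^ i) x) :
    a k = 0 := by
  have := coeff_eq_zero_of_sum_mul_pow_apply_eq_zero hσ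
    (a := fun i => a i - if i < k then b i else 0) hk fun x hx => by
      have hb : ∑ i ∈ range (k + 1), (if i < k then b i else 0) * (σ ^ i) x =
          ∑ i ∈ range k, b i * (σ ^ i) x := by
        rw [sum_range_succ, if_neg (lt_irrefl k), zero_mul, add_zero]
        exact sum_congr rfl fun i hi => by rw [if_pos (mem_range.mp hi)]
      simp only [sub_mul, sum_sub_distrib, hb, h x hx, sub_self]
  simpa using this

theorem coeff_eq_zero_of_pow_apply_sum_eq
    (hσ : ∀ x, σ x = x → x ∈ (⊥ : Subalgebra K L)) {t k : ℕ} {b c : ℕ → L} {V : Submodule K L}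
    (htk : t < k) (hk : k < finrank K V)
    (h : ∀ u ∈ V, (σ ^ (k - t)) (∑ i ∈ range (t + 1), b i * (σ ^ i) u) =
      ∑ i ∈ range k, c i * (σ ^ i) u) :
    b t = 0 := by
  set e := k - t
  have hshift := coeff_eq_zero_of_sum_mul_pow_apply_eq hσ
    (a := fun j => if e ≤ j then (σ ^ e) (b (j - e)) else 0) hk fun u hu => by
      rw [← h u hu, show k + 1 = e + (t + 1) by omega, sum_range_add, map_sum,
        sum_eq_zero fun j hj => by rw [if_neg (by simpa using hj), zero_mul], zero_add]
      refine sum_congr rfl fun i _ => ?_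
      rw [if_pos (by omega), Nat.add_sub_cancel_left, map_mul, pow_add, AlgHom.mul_apply]
  rw [if_pos (by omega), show k - e = t by omega] at hshift
  exact (map_eq_zero_iff _ (σ ^ e).injective).mp hshift

theorem exists_eq_mul_of_forall_exists_sum_eq
    (hσ : ∀ x, σ x = x → x ∈ (⊥ : Subalgebra K L)) {k : ℕ} {V : Submodule K L} (hk0 : 0 < k)
    (hk : k < finrank K V) (ψ : L → L)
    (h : ∀ a : ℕ → L, ∃ b : ℕ → L, ∀ u ∈ V,
      ∑ i ∈ range k, a i * (σ ^ i) (ψ u) = ∑ i ∈ range k, b i * (σ ^ i) u) :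
    ∃ c, ∀ u ∈ V, ψ u = c * u := by
  classical
  obtain ⟨b, hb⟩ := h (Pi.single 0 1)
  have hψ : ∀ u ∈ V, ψ u = ∑ i ∈ range k, b i * (σ ^ i) u := fun u hu => by
    rw [← hb u hu, sum_single_mul_pow_apply σ hk0, pow_zero, AlgHom.one_apply]
  have hb0 : ∀ t ∈ range k, t ≠ 0 → b t = 0 := by
    by_contra! hne
    obtain ⟨t, ht, hmax⟩ := ((range k).filter fun t => t ≠ 0 ∧ b t ≠ 0).exists_max_image id
      (by simpa [Finset.Nonempty] using hne)
    simp only [mem_filter, mem_range] at ht hmax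
    obtain ⟨htk, ht0, hbt⟩ := ht
    obtain ⟨c, hc⟩ := h (Pi.single (k - t) 1)
    refine hbt (coeff_eq_zero_of_pow_apply_sum_eq hσ (c := c) htk hk fun u hu => ?_)
    rw [← hc u hu, sum_single_mul_pow_apply σ (by omega), hψ u hu]
    refine congrArg _ (sum_subset (range_subset_range.mpr (by omega)) fun i hi hit => ?_)
    simp only [mem_range] at hi hit
    by_contra hbi
    exact absurd (hmax i ⟨hi, by omega, fun h => hbi (by rw [h, zero_mul])⟩) (by simp; omega)
  refine ⟨b 0, fun u hu => ?_⟩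
  rw [hψ u hu, sum_eq_single_of_mem 0 (mem_range.mpr hk0)
    fun i hi h0 => by rw [hb0 i hi h0, zero_mul], pow_zero, AlgHom.one_apply]

end

namespace FiniteField

theorem frobeniusAlgHom_pow_apply {K R : Type*} [Field K] [Fintype K] [CommRing R]
    [Algebra K R] (m : ℕ) (x : R) : (frobeniusAlgHom K R ^ m) x = x ^ Fintype.card K ^ m := by
  rw [AlgHom.coe_pow, coe_frobeniusAlgHom, pow_iterate]

variable {K L : Type*} [Field K] [Fintype K] [Field L] [Fintype L] [Algebra K L]

theorem mem_bot_of_pow_card_eq_self {x : L} (hx : x ^ Fintype.card K = x) :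
    x ∈ (⊥ : Subalgebra K L) := by
  refine Algebra.mem_bot.mpr (IntermediateField.mem_bot.mp ((IsGalois.mem_bot_iff_fixed x).mpr
    fun f => ?_))
  obtain ⟨j, hj⟩ := (bijective_frobeniusAlgHom_pow K L).2 f.toAlgHom
  rw [← AlgEquiv.coe_toAlgHom, ← hj, AlgHom.coe_pow]
  exact Function.iterate_fixed hx j

theorem mem_bot_of_frobeniusAlgHom_pow_apply_eq_self {n s : ℕ}
    (hL : Fintype.card L = Fintype.card K ^ n) (hgcd : n.gcd s = 1) {x : L}
    (hx : (frobeniusAlgHom K L ^ s) x = x) : x ∈ (⊥ : Subalgebra K L) := by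
  have hs : Function.IsPeriodicPt (frobeniusAlgHom K L) s x := by
    rwa [Function.IsPeriodicPt, Function.IsFixedPt, ← AlgHom.coe_pow]
  have hn : Function.IsPeriodicPt (frobeniusAlgHom K L) n x := by
    rw [Function.IsPeriodicPt, Function.IsFixedPt, ← AlgHom.coe_pow, frobeniusAlgHom_pow_apply,
      ← hL, pow_card]
  have h1 := hn.gcd hs
  rw [hgcd] at h1
  exact mem_bot_of_pow_card_eq_self h1

end FiniteField

theorem stmt11_general (q n m k s : ℕ) (Fq Fqn : Type) [Field Fq] [Fintype Fq] [Field Fqn]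
    [Fintype Fqn] [Algebra Fq Fqn]
    (hq : Fintype.card Fq = q) (hqn : Fintype.card Fqn = q ^ n)
    (hk : 0 < k) (hkm : k < m)
    (hgcd : Nat.gcd n s = 1)
    (α : Fin m → Fqn) (hα : LinearIndependent Fq α) :
    -- K = {c ∈ F_{q^n} : c·U_S ⊆ U_S} (the largest subfield F_{q^ℓ} over which U_S
    -- is a vector space); an F_q-linear map ψ with ψ(U_S) ⊆ U_S belongs to the
    -- middle nucleus of π_S(G_{k,s}) iff it is multiplication by some c ∈ K on U_S
    ∀ ψ : Fqn →ₗ[Fq] Fqn, (∀ u ∈ Submodule.span Fq (Set.range α),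
        ψ u ∈ Submodule.span Fq (Set.range α)) →
      ((∀ a : ℕ → Fqn, ∃ b : ℕ → Fqn, ∀ u ∈ Submodule.span Fq (Set.range α),
          (∑ i ∈ Finset.range k, a i * (ψ u) ^ q ^ (s * i))
            = ∑ i ∈ Finset.range k, b i * u ^ q ^ (s * i))
        ↔ ∃ c ∈ {c : Fqn | ∀ u ∈ Submodule.span Fq (Set.range α),
                    c * u ∈ Submodule.span Fq (Set.range α)},
            ∀ u ∈ Submodule.span Fq (Set.range α), ψ u = c * u) := by
  intro ψ hψ
  subst hq
  set σ := FiniteField.frobeniusAlgHom Fq Fqn ^ s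
  have hσ_pow (i : ℕ) (x : Fqn) : (σ ^ i) x = x ^ Fintype.card Fq ^ (s * i) := by
    rw [← pow_mul, FiniteField.frobeniusAlgHom_pow_apply]
  have hσ_fixed (x : Fqn) (hx : σ x = x) : x ∈ (⊥ : Subalgebra Fq Fqn) :=
    FiniteField.mem_bot_of_frobeniusAlgHom_pow_apply_eq_self hqn hgcd hx
  have hkU : k < finrank Fq (Submodule.span Fq (Set.range α)) := by
    rwa [finrank_span_eq_card hα, Fintype.card_fin]
  simp only [← hσ_pow]
  constructor
  · intro h
    obtain ⟨c, hc⟩ := exists_eq_mul_of_forall_exists_sum_eq hσ_fixed hk hkU ψ h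
    exact ⟨c, fun u hu => hc u hu ▸ hψ u hu, hc⟩
  · rintro ⟨c, -, hc⟩ a
    exact ⟨fun i => a i * (σ ^ i) c, fun u hu => by simp only [hc u hu, map_mul, mul_assoc]⟩

theorem stmt11 (q n m k s : ℕ) (Fq Fqn : Type) [Field Fq] [Fintype Fq] [Field Fqn]
    [Fintype Fqn] [Algebra Fq Fqn]
    (hq : Fintype.card Fq = q) (hqn : Fintype.card Fqn = q ^ n)
    (hn : 0 < n) (hk : 0 < k) (hkm : k < m) (hmn : m ≤ n)
    (hs : 0 < s) (hgcd : Nat.gcd n s = 1)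
    (α : Fin m → Fqn) (hα : LinearIndependent Fq α) :
    -- K = {c ∈ F_{q^n} : c·U_S ⊆ U_S} (the largest subfield F_{q^ℓ} over which U_S
    -- is a vector space); an F_q-linear map ψ with ψ(U_S) ⊆ U_S belongs to the
    -- middle nucleus of π_S(G_{k,s}) iff it is multiplication by some c ∈ K on U_S
    ∀ ψ : Fqn →ₗ[Fq] Fqn, (∀ u ∈ Submodule.span Fq (Set.range α),
        ψ u ∈ Submodule.span Fq (Set.range α)) →
      ((∀ a : ℕ → Fqn, ∃ b : ℕ → Fqn, ∀ u ∈ Submodule.span Fq (Set.range α),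
          (∑ i ∈ Finset.range k, a i * (ψ u) ^ q ^ (s * i))
            = ∑ i ∈ Finset.range k, b i * u ^ q ^ (s * i))
        ↔ ∃ c ∈ {c : Fqn | ∀ u ∈ Submodule.span Fq (Set.range α),
                    c * u ∈ Submodule.span Fq (Set.range α)},
            ∀ u ∈ Submodule.span Fq (Set.range α), ψ u = c * u) :=
  stmt11_general q n m k s Fq Fqn hq hqn hk hkm hgcd α hα
end
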